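/- arXiv:1907.11009 — 3 statements merged into one kernel-verified Lean document; each statement's English description precedes it below -/
import Mathlib

section
/- Defining fₙ(α) = e^{(t/2)e^{−iθ}α²} · (c·α + s·e^{iθ}∂_α)ⁿ · e^{−(t/2)e^{−iθ}α²}, where c = cosh(r), s = sinh(r), t = tanh(r), one has fₙ(α) = λ^{n/2} Heₙ(α/(c√λ)) where λ = −e^{iθ} t and Heₙ are the probabilists' Hermite polynomials satisfying He₀ = 1 and Heₙ₊₁(x) = x·Heₙ(x) − Heₙ'(x). -/
/-!
Differentiating the Gaussian `g z = exp (a z²)` gives `L (g P) = g ((c + 2ab) z P + b P')` for the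
ladder operator `L f = c z f + b f'`. For `a = -(t/2) e^{-iθ}` and `b = s e^{iθ} = -c λ` one has
`c + 2ab = 1/c`, so on `P = νⁿ Heₙ (z / (c ν))` with `ν² = λ` this is exactly the recurrence
`Heₙ₊₁ = x Heₙ - Heₙ'`, and the claim follows by induction on `n`.
-/

open Complex Polynomial

theorem Polynomial.hasDerivAt_aeval_div {𝕜 R : Type*} [NontriviallyNormedField 𝕜] [CommSemiring R]
    [Algebra R 𝕜] (p : R[X]) (k z : 𝕜) :
    HasDerivAt (fun z => aeval (z / k) p) (aeval (z / k) (derivative p) / k) z := by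
  simpa [div_eq_mul_inv, Function.comp_def] using
    (p.hasDerivAt_aeval (z / k)).comp z ((hasDerivAt_id z).div_const k)

theorem HasDerivAt.cexp_mul_sq_mul {a z P' : ℂ} {P : ℂ → ℂ} (hP : HasDerivAt P P' z) :
    HasDerivAt (fun z => cexp (a * z ^ 2) * P z) (cexp (a * z ^ 2) * (2 * a * z * P z + P')) z := by
  have hexp : HasDerivAt (fun z => cexp (a * z ^ 2)) (cexp (a * z ^ 2) * (a * (2 * z))) z := by
    simpa using ((hasDerivAt_pow 2 z).const_mul a).cexp
  exact (hexp.mul hP).congr_deriv (by ring)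

section Ladder

variable {c b a ν : ℂ}

theorem ladder_cexp_mul_scaled_hermite (hν : ν ≠ 0) (hb : b = -(c * ν ^ 2))
    (hca : c ^ 2 * (1 - 2 * a * ν ^ 2) = 1) (n : ℕ) (z : ℂ) :
    c * (z * (cexp (a * z ^ 2) * (ν ^ n * aeval (z / (c * ν)) (hermite n)))) +
        b * deriv (fun z => cexp (a * z ^ 2) * (ν ^ n * aeval (z / (c * ν)) (hermite n))) z =
      cexp (a * z ^ 2) * (ν ^ (n + 1) * aeval (z / (c * ν)) (hermite (n + 1))) := by
  have hc : c ≠ 0 := by rintro rfl; simp at hca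
  have hd : HasDerivAt (fun z => cexp (a * z ^ 2) * (ν ^ n * aeval (z / (c * ν)) (hermite n)))
      (cexp (a * z ^ 2) * (2 * a * z * (ν ^ n * aeval (z / (c * ν)) (hermite n)) +
        ν ^ n * (aeval (z / (c * ν)) (derivative (hermite n)) / (c * ν)))) z :=
    (((hermite n).hasDerivAt_aeval_div _ z).const_mul (ν ^ n)).cexp_mul_sq_mul
  rw [hd.deriv, hermite_succ]
  simp only [map_sub, map_mul, aeval_X]
  subst hb
  field_simp
  linear_combination ν ^ (n + 1) * z * aeval (z / (c * ν)) (hermite n) * hca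

theorem iterate_ladder_cexp_eq_cexp_mul_scaled_hermite (hν : ν ≠ 0) (hb : b = -(c * ν ^ 2))
    (hca : c ^ 2 * (1 - 2 * a * ν ^ 2) = 1) (n : ℕ) :
    (fun f : ℂ → ℂ => fun z => c * (z * f z) + b * deriv f z)^[n] (fun z => cexp (a * z ^ 2)) =
      fun z => cexp (a * z ^ 2) * (ν ^ n * aeval (z / (c * ν)) (hermite n)) := by
  induction n with
  | zero => simp
  | succ n ih =>
    rw [Function.iterate_succ_apply', ih]
    exact funext (ladder_cexp_mul_scaled_hermite hν hb hca n)

end Ladder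

/-- The conjugated iterates of the squeezed ladder operator are Hermite
polynomials: with `c = cosh r`, `s = sinh r`, `t = tanh r ≠ 0`, `λ = -e^{iθ}t`
and `sq` a fixed square root of `λ`,
`fₙ(α) = e^{(t/2)e^{-iθ}α²} (cα + s e^{iθ}∂_α)ⁿ e^{-(t/2)e^{-iθ}α²}
       = sqⁿ · Heₙ(α/(c·sq))`. -/
theorem iterates_are_hermite (r θ : ℝ) (ht : Real.tanh r ≠ 0)
    (sq : ℂ) (hsq : sq ^ 2 = -Complex.exp (Complex.I * θ) * Real.tanh r) :
    ∀ (n : ℕ) (α : ℂ),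
      Complex.exp ((Real.tanh r : ℂ) / 2 * Complex.exp (-Complex.I * θ) * α ^ 2) *
        ((fun f : ℂ → ℂ => fun z =>
            (Real.cosh r : ℂ) * (z * f z) +
              (Real.sinh r : ℂ) * Complex.exp (Complex.I * θ) * deriv f z)^[n]
          (fun z =>
            Complex.exp (-((Real.tanh r : ℂ) / 2) * Complex.exp (-Complex.I * θ) * z ^ 2))) α
      = sq ^ n * Polynomial.aeval (α / ((Real.cosh r : ℂ) * sq)) (Polynomial.hermite n) := by
  intro n α
  have hsinh : (Real.sinh r : ℂ) = Real.tanh r * Real.cosh r := by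
    rw [Real.tanh_eq_sinh_div_cosh, ← ofReal_mul, div_mul_cancel₀ _ (Real.cosh_pos r).ne']
  have hcosh : (Real.cosh r : ℂ) ^ 2 - (Real.sinh r : ℂ) ^ 2 = 1 := by
    exact_mod_cast Real.cosh_sq_sub_sinh_sq r
  have hexp : cexp (I * θ) * cexp (-I * θ) = 1 := by rw [← Complex.exp_add]; simp
  have hν : sq ≠ 0 := by
    rintro rfl
    rw [eq_comm, zero_pow two_ne_zero, mul_eq_zero, neg_eq_zero] at hsq
    exact hsq.elim (Complex.exp_ne_zero _) (mod_cast ht)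
  have hb : (Real.sinh r : ℂ) * cexp (I * θ) = -((Real.cosh r : ℂ) * sq ^ 2) := by
    rw [hsq, hsinh]; ring
  have hca : (Real.cosh r : ℂ) ^ 2 *
      (1 - 2 * (-((Real.tanh r : ℂ) / 2) * cexp (-I * θ)) * sq ^ 2) = 1 := by
    rw [hsq]
    linear_combination hcosh + (Real.sinh r + Real.tanh r * Real.cosh r) * hsinh
      - (Real.cosh r * Real.tanh r) ^ 2 * hexp
  rw [iterate_ladder_cexp_eq_cexp_mul_scaled_hermite hν hb hca, ← mul_assoc,
    ← Complex.exp_add, ← add_mul, ← add_mul, add_neg_cancel, zero_mul, zero_mul, Complex.exp_zero,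
    one_mul]
end

section
/- The maximum over x, y ∈ ℝ and t ∈ [0,1) of (1−t²)^{3/2}(x² + y²) e^{−(1+t)x²} e^{−(1−t)y²} equals (1/e)·√(27/16) = 3√3/(4e), attained at x = 0, y = 1/√(1−t), t = 1/2. -/
/-!
Since `1 + t ≥ 1 - t`, the Gaussian factor is at most `exp (-(1 - t) u)` with `u = x² + y²`, and
`u exp (-b u) ≤ 1 / (b e)`. Writing `(1 - t²)^{3/2} = (1 - t) √((1 + t)³ (1 - t))`, the factor
`1 - t` cancels and the bound becomes `√((1 + t)³ (1 - t)) / e`. The quartic `(1 + t)³ (1 - t)`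
peaks at `t = 1/2` with value `27/16`, and equality holds for `x = 0`, `(1 - t) y² = 1`.
-/

open Real

lemma mul_exp_neg_mul_le {b : ℝ} (hb : 0 < b) (u : ℝ) :
    u * exp (-(b * u)) ≤ 1 / (b * exp 1) := by
  rw [exp_neg, ← div_eq_mul_inv, div_le_div_iff₀ (exp_pos _) (by positivity)]
  linarith [exp_one_mul_le_exp (x := b * u)]

lemma exp_neg_mul_sq_mul_exp_neg_mul_sq_le {a b : ℝ} (hab : b ≤ a) (x y : ℝ) :
    exp (-a * x ^ 2) * exp (-b * y ^ 2) ≤ exp (-(b * (x ^ 2 + y ^ 2))) := by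
  rw [← exp_add, exp_le_exp]
  nlinarith [sq_nonneg x]

lemma one_add_pow_three_mul_one_sub_le (t : ℝ) : (1 + t) ^ 3 * (1 - t) ≤ 27 / 16 := by
  -- `27/16 - (1 + t)³ (1 - t) = (2t - 1)² ((2t + 3)² + 2) / 16`
  nlinarith [sq_nonneg (2 * t - 1), mul_nonneg (sq_nonneg (2 * t - 1)) (sq_nonneg (2 * t + 3))]

lemma one_sub_sq_rpow_three_halves {t : ℝ} (ht : t ∈ Set.Icc (-1 : ℝ) 1) :
    (1 - t ^ 2) ^ ((3 : ℝ) / 2) = (1 - t) * √((1 + t) ^ 3 * (1 - t)) := by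
  obtain ⟨h₁, h₂⟩ := ht
  have hsq : 0 ≤ 1 - t ^ 2 := by nlinarith
  rw [show (1 + t) ^ 3 * (1 - t) = (1 + t) ^ 2 * (1 - t ^ 2) by ring,
    sqrt_mul (sq_nonneg _), sqrt_sq (by linarith), rpow_div_two_eq_sqrt _ hsq,
    show ((3 : ℝ)) = ((3 : ℕ) : ℝ) by norm_num, rpow_natCast, pow_succ, sq_sqrt hsq]
  ring

lemma sqrt_twentySeven_div_sixteen : √(27 / 16 : ℝ) = 3 * √3 / 4 := by
  rw [show (27 / 16 : ℝ) = 3 * (3 / 4) ^ 2 by norm_num, sqrt_mul (by norm_num),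
    sqrt_sq (by norm_num)]
  ring

lemma one_sub_sq_rpow_mul_gaussian_le {t : ℝ} (ht : t ∈ Set.Ico (0 : ℝ) 1) (x y : ℝ) :
    (1 - t ^ 2) ^ ((3 : ℝ) / 2) * (x ^ 2 + y ^ 2) * exp (-(1 + t) * x ^ 2) *
        exp (-(1 - t) * y ^ 2) ≤ √((1 + t) ^ 3 * (1 - t)) / exp 1 := by
  obtain ⟨ht₀, ht₁⟩ := ht
  have hpos : 0 < 1 - t := by linarith
  calc (1 - t ^ 2) ^ ((3 : ℝ) / 2) * (x ^ 2 + y ^ 2) * exp (-(1 + t) * x ^ 2) *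
        exp (-(1 - t) * y ^ 2)
      = (1 - t) * √((1 + t) ^ 3 * (1 - t)) *
          ((x ^ 2 + y ^ 2) * (exp (-(1 + t) * x ^ 2) * exp (-(1 - t) * y ^ 2))) := by
        rw [one_sub_sq_rpow_three_halves ⟨by linarith, ht₁.le⟩]
        ring
    _ ≤ (1 - t) * √((1 + t) ^ 3 * (1 - t)) *
          ((x ^ 2 + y ^ 2) * exp (-((1 - t) * (x ^ 2 + y ^ 2)))) := by
        gcongr
        exact exp_neg_mul_sq_mul_exp_neg_mul_sq_le (by linarith) x y
    _ ≤ (1 - t) * √((1 + t) ^ 3 * (1 - t)) * (1 / ((1 - t) * exp 1)) := by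
        gcongr
        exact mul_exp_neg_mul_le hpos _
    _ = √((1 + t) ^ 3 * (1 - t)) / exp 1 := by
        field_simp

/-- The maximum over `x, y ∈ ℝ`, `t ∈ [0,1)` of
`(1−t²)^{3/2}(x²+y²) e^{−(1+t)x²} e^{−(1−t)y²}` equals `3√3/(4e)`, attained at
`x = 0`, `y = 1/√(1−t)`, `t = 1/2`. -/
theorem gaussian_overlap_optimization :
    (∀ x y : ℝ, ∀ t ∈ Set.Ico (0 : ℝ) 1,
      (1 - t ^ 2) ^ ((3 : ℝ) / 2) * (x ^ 2 + y ^ 2) *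
          Real.exp (-(1 + t) * x ^ 2) * Real.exp (-(1 - t) * y ^ 2) ≤
        3 * Real.sqrt 3 / (4 * Real.exp 1)) ∧
    (1 - (1 / 2 : ℝ) ^ 2) ^ ((3 : ℝ) / 2) *
        ((0 : ℝ) ^ 2 + (1 / Real.sqrt (1 - 1 / 2)) ^ 2) *
        Real.exp (-(1 + 1 / 2) * (0 : ℝ) ^ 2) *
        Real.exp (-(1 - 1 / 2) * (1 / Real.sqrt (1 - 1 / 2)) ^ 2) =
      3 * Real.sqrt 3 / (4 * Real.exp 1) := by
  have hbound : 3 * √3 / (4 * exp 1) = √(27 / 16) / exp 1 := by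
    rw [sqrt_twentySeven_div_sixteen, div_div]
  rw [hbound]
  constructor
  · intro x y t ht
    refine (one_sub_sq_rpow_mul_gaussian_le ht x y).trans ?_
    gcongr
    exact one_add_pow_three_mul_one_sub_le t
  · rw [one_sub_sq_rpow_three_halves ⟨by norm_num, by norm_num⟩]
    have hy : (1 / √(1 - 1 / 2 : ℝ)) ^ 2 = 2 := by
      rw [div_pow, sq_sqrt (by norm_num)]
      norm_num
    rw [hy, show (1 + 1 / 2 : ℝ) ^ 3 * (1 - 1 / 2) = 27 / 16 by norm_num,
      show (-(1 - 1 / 2) * 2 : ℝ) = -1 by norm_num, exp_neg, zero_pow two_ne_zero, mul_zero,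
      exp_zero]
    ring
end

section
/- The stellar robustness of the single-photon Fock state |1⟩ equals √(1 − 3√3/(4e)): the infimum of √(1 − |⟨φ|1⟩|²) over all pure Gaussian states |φ⟩ = D(γ)S(ξ)|0⟩ equals √(1 − 3√3/(4e)) ≈ 0.72. -/
open Complex

/-!
With `a = |γ|²` and `u = |tanh r|`, the phase only enters through `|Re(γ² e^{iθ})| ≤ a`, so the
overlap is at most `a (1 - u²)^{3/2} e^{-a(1-u)}`. Maximising in `a` via `x e^{-x} ≤ e⁻¹` leaves
`e⁻¹ ((1 - u) (1 + u)³)^{1/2}`, and `(1 - u)(1 + u)³ ≤ 27/16` with equality at `u = 1/2`.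
The bound is attained at `γ = i√2`, `tanh r = 1/2`, `θ = 0`.
-/

noncomputable def singlePhotonOverlap (γ : ℂ) (r θ : ℝ) : ℝ :=
  ‖γ‖ ^ 2 / Real.cosh r ^ 3 *
    Real.exp (-‖γ‖ ^ 2 - Real.tanh r * (γ ^ 2 * Complex.exp (Complex.I * θ)).re)

namespace Real

theorem mul_exp_neg_mul_le_exp_neg_one_div {s : ℝ} (a : ℝ) (hs : 0 < s) :
    a * exp (-(a * s)) ≤ exp (-1) / s := by
  rw [le_div_iff₀ hs]
  calc a * exp (-(a * s)) * s = a * s * exp (-(a * s)) := by ring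
    _ ≤ exp (-1) := mul_exp_neg_le_exp_neg_one _

theorem one_sub_mul_one_add_pow_three_le (u : ℝ) : (1 - u) * (1 + u) ^ 3 ≤ 27 / 16 := by
  -- `27 - 16 (1 - u) (1 + u)³ = (2u - 1)² ((2u + 3)² + 2)`
  nlinarith [mul_nonneg (sq_nonneg (2 * u - 1)) (sq_nonneg (2 * u + 3)), sq_nonneg (2 * u - 1)]

theorem four_le_three_sqrt_three_mul {u c : ℝ} (hu : u < 1) (hc : 0 < c)
    (hcu : c ^ 2 * (1 - u ^ 2) = 1) : 4 ≤ 3 * √3 * ((1 - u) * c ^ 3) := by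
  have hX_sq : ((1 - u) * c ^ 3) ^ 2 * ((1 - u) * (1 + u) ^ 3) = 1 :=
    calc _ = (c ^ 2 * (1 - u ^ 2)) ^ 3 := by ring
      _ = 1 := by rw [hcu, one_pow]
  set X := (1 - u) * c ^ 3
  have hX : 0 ≤ X := by positivity
  have h16 : 16 ≤ 27 * X ^ 2 := by
    nlinarith [one_sub_mul_one_add_pow_three_le u, sq_nonneg X]
  have hsq : (3 * √3 * X) ^ 2 = 27 * X ^ 2 := by
    rw [mul_pow, mul_pow, sq_sqrt (by norm_num)]; ring
  nlinarith [mul_nonneg (sqrt_nonneg 3) hX]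

theorem div_pow_three_mul_exp_le {a u c : ℝ} (hu : u < 1) (hc : 0 < c)
    (hcu : c ^ 2 * (1 - u ^ 2) = 1) :
    a / c ^ 3 * exp (-(a * (1 - u))) ≤ 3 * √3 / (4 * exp 1) := by
  have hu' : 0 < 1 - u := by linarith
  calc a / c ^ 3 * exp (-(a * (1 - u))) = a * exp (-(a * (1 - u))) / c ^ 3 := by ring
    _ ≤ exp (-1) / (1 - u) / c ^ 3 := by
        gcongr; exact mul_exp_neg_mul_le_exp_neg_one_div a hu'
    _ ≤ 3 * √3 / (4 * exp 1) := by
        rw [div_div, exp_neg, div_le_div_iff₀ (by positivity) (by positivity),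
          show (exp 1)⁻¹ * (4 * exp 1) = 4 by field_simp]
        exact four_le_three_sqrt_three_mul hu hc hcu

theorem cosh_sq_mul_one_sub_tanh_sq (r : ℝ) : cosh r ^ 2 * (1 - tanh r ^ 2) = 1 := by
  rw [tanh_eq_sinh_div_cosh]
  field_simp
  linarith [cosh_sq r]

end Real

theorem abs_re_mul_exp_I_mul_le_norm (z : ℂ) (θ : ℝ) : |(z * exp (I * θ)).re| ≤ ‖z‖ := by
  simpa [norm_exp_I_mul_ofReal] using abs_re_le_norm (z * exp (I * θ))

theorem singlePhotonOverlap_le (γ : ℂ) (r θ : ℝ) :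
    singlePhotonOverlap γ r θ ≤ 3 * Real.sqrt 3 / (4 * Real.exp 1) := by
  have hphase : -‖γ‖ ^ 2 - Real.tanh r * (γ ^ 2 * exp (I * θ)).re ≤
      -(‖γ‖ ^ 2 * (1 - |Real.tanh r|)) := by
    have hre := abs_re_mul_exp_I_mul_le_norm (γ ^ 2) θ
    have hprod := neg_abs_le (Real.tanh r * (γ ^ 2 * exp (I * θ)).re)
    rw [norm_pow] at hre
    rw [abs_mul] at hprod
    nlinarith [abs_nonneg (Real.tanh r)]
  calc singlePhotonOverlap γ r θ
      ≤ ‖γ‖ ^ 2 / Real.cosh r ^ 3 * Real.exp (-(‖γ‖ ^ 2 * (1 - |Real.tanh r|))) := by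
        unfold singlePhotonOverlap; gcongr
    _ ≤ 3 * Real.sqrt 3 / (4 * Real.exp 1) :=
        Real.div_pow_three_mul_exp_le (Real.abs_tanh_lt_one r) (Real.cosh_pos r)
          (by rw [sq_abs]; exact Real.cosh_sq_mul_one_sub_tanh_sq r)

theorem singlePhotonOverlap_sqrt_two_mul_I_artanh_half :
    singlePhotonOverlap (Real.sqrt 2 * I) (Real.artanh (1 / 2)) 0 =
      3 * Real.sqrt 3 / (4 * Real.exp 1) := by
  have hhalf : (1 / 2 : ℝ) ∈ Set.Ioo (-1) 1 := by norm_num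
  have hnorm : ‖(Real.sqrt 2 * I : ℂ)‖ ^ 2 = 2 := by simp
  have hsq : ((Real.sqrt 2 * I : ℂ) ^ 2 * exp (I * (0 : ℝ))).re = -2 := by
    simp [mul_pow, ← ofReal_pow]
  have hcosh : Real.sqrt (1 - (1 / 2) ^ 2) = Real.sqrt 3 / 2 := by
    rw [show (1 : ℝ) - (1 / 2) ^ 2 = 3 / 2 ^ 2 by norm_num, Real.sqrt_div' _ (by norm_num),
      Real.sqrt_sq (by norm_num)]
  unfold singlePhotonOverlap
  rw [hnorm, hsq, Real.cosh_artanh hhalf, Real.tanh_artanh hhalf, hcosh,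
    show (-2 : ℝ) - 1 / 2 * -2 = -1 by norm_num, Real.exp_neg]
  have h3 := Real.sq_sqrt (show (0 : ℝ) ≤ 3 by norm_num)
  field_simp
  nlinarith

/-- The stellar robustness of the single-photon Fock state `|1⟩`: the infimum
over pure Gaussian states `|φ⟩ = D(γ)S(re^{iθ})|0⟩` of the trace distance
`√(1 − |⟨φ|1⟩|²)`, with
`|⟨φ|1⟩|² = (|γ|²/cosh³r)·exp(−|γ|² − tanh r · Re(γ²e^{iθ}))`,
equals `√(1 − 3√3/(4e))`. -/
theorem stellar_robustness_single_photon :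
    sInf {d : ℝ | ∃ (γ : ℂ) (r θ : ℝ),
        d = Real.sqrt (1 -
          ‖γ‖ ^ 2 / Real.cosh r ^ 3 *
            Real.exp (-‖γ‖ ^ 2 -
              Real.tanh r * (γ ^ 2 * Complex.exp (Complex.I * θ)).re))} =
      Real.sqrt (1 - 3 * Real.sqrt 3 / (4 * Real.exp 1)) := by
  refine IsLeast.csInf_eq ⟨⟨Real.sqrt 2 * I, Real.artanh (1 / 2), 0, ?_⟩, ?_⟩
  · rw [← singlePhotonOverlap, singlePhotonOverlap_sqrt_two_mul_I_artanh_half]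
  · rintro d ⟨γ, r, θ, rfl⟩
    exact Real.sqrt_le_sqrt (sub_le_sub_left (singlePhotonOverlap_le γ r θ) 1)
end
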